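/- arXiv:2009.06835 — 3 statements merged into one kernel-verified Lean document; each statement's English description precedes it below -/
import Mathlib

section
/- Let (f, φ) : A ⇄ B and (g, γ) : B ⇄ C be delta lenses between small categories, with induced categories Λ (for φ) and Ω (for γ) and induced functors φ̄ : Λ → B and γ : Ω → B (the identity-on-objects functor sending (b, w) ↦ γ₁(b, w)). Then the induced category of the composite delta lens (g ∘ f, φ ∘ γ) is isomorphic, as a category, to the pullback Λ ×_B Ω of the functors φ̄ : Λ → B and γ : Ω → B (the category whose objects are pairs (x, y) of objects with φ̄(x) = γ(y) and whose morphisms are pairs of morphisms (m, n) with φ̄(m) = γ(n)). -/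
open CategoryTheory

universe v v₁ v₂ v₃ v₄ u u₁ u₂ u₃ u₄

/-- A cofunctor `φ` from a small category `B` to a small category `A` consists of an
object map `φ₀ : A → B` together with, for each object `a` of `A` and morphism
`u : φ₀(a) ⟶ b` of `B`, a chosen object `p₀(a, u)` of `A` and a chosen lift
`φ₁(a, u) : a ⟶ p₀(a, u)`, such that (i) `φ₀(p₀(a, u)) = b`, (ii) `p₀(a, 1) = a` and
`φ₁(a, 1) = 1ₐ`, and (iii) `p₀(a, v ∘ u) = p₀(p₀(a, u), v)` and
`φ₁(a, v ∘ u) = φ₁(p₀(a, u), v) ∘ φ₁(a, u)`. -/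
structure Cofunctor (B : Type u₁) (A : Type u₂) [Category.{v₁} B] [Category.{v₂} A] where
  /-- the object map `φ₀` -/
  obj : A → B
  /-- the codomain `p₀(a, u)` of the chosen lift -/
  p : ∀ (a : A) ⦃b : B⦄, (obj a ⟶ b) → A
  /-- the chosen lift `φ₁(a, u) : a ⟶ p₀(a, u)` -/
  lift : ∀ (a : A) ⦃b : B⦄ (u : obj a ⟶ b), a ⟶ p a u
  /-- law (i): `φ₀(p₀(a, u)) = b` -/
  obj_p : ∀ (a : A) ⦃b : B⦄ (u : obj a ⟶ b), obj (p a u) = b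
  /-- law (ii), object part: `p₀(a, 1) = a` -/
  p_id : ∀ a : A, p a (𝟙 (obj a)) = a
  /-- law (ii), morphism part: `φ₁(a, 1) = 1ₐ` -/
  lift_id : ∀ a : A, lift a (𝟙 (obj a)) = eqToHom (p_id a).symm
  /-- law (iii), object part: `p₀(a, v ∘ u) = p₀(p₀(a, u), v)` -/
  p_comp : ∀ (a : A) ⦃b c : B⦄ (u : obj a ⟶ b) (v : b ⟶ c),
      p a (u ≫ v) = p (p a u) (eqToHom (obj_p a u) ≫ v)
  /-- law (iii), morphism part: `φ₁(a, v ∘ u) = φ₁(p₀(a, u), v) ∘ φ₁(a, u)` -/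
  lift_comp : ∀ (a : A) ⦃b c : B⦄ (u : obj a ⟶ b) (v : b ⟶ c),
      lift a (u ≫ v) =
        lift a u ≫ lift (p a u) (eqToHom (obj_p a u) ≫ v) ≫ eqToHom (p_comp a u v).symm

variable {B : Type u₁} {A : Type u₂} [Category.{v₁} B] [Category.{v₂} A]

/-- A morphism `a → a′` of the category `Λ` induced by a cofunctor `φ`:
a pair `(a, u)` where `u : φ₀(a) ⟶ b` is a morphism of `B` and `p₀(a, u) = a′`. -/
def LambdaHom (φ : Cofunctor B A) (a a' : A) : Type _ :=
  Σ b : B, { u : φ.obj a ⟶ b // φ.p a u = a' }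

/-- The identity morphism `(a, 1_{φ₀(a)})` of `Λ`. -/
def lambdaId (φ : Cofunctor B A) (a : A) : LambdaHom φ a a :=
  ⟨φ.obj a, 𝟙 (φ.obj a), φ.p_id a⟩

/-- The composition `(p₀(a, u), v) ∘ (a, u) = (a, v ∘ u)` of `Λ`. -/
def lambdaComp (φ : Cofunctor B A) {a a' a'' : A}
    (m : LambdaHom φ a a') (n : LambdaHom φ a' a'') : LambdaHom φ a a'' :=
  ⟨n.1, m.2.1 ≫ eqToHom ((φ.obj_p a m.2.1).symm.trans (congrArg φ.obj m.2.2)) ≫ n.2.1, by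
    obtain ⟨b, u, hu⟩ := m
    obtain ⟨c, v, hv⟩ := n
    dsimp at *
    subst hu
    rw [φ.p_comp]
    simpa using hv⟩

theorem LambdaHom.ext' {φ : Cofunctor B A} {a a' : A} {b x : B} {u : φ.obj a ⟶ b}
    {w : φ.obj a ⟶ x} {h1 : φ.p a w = a'} {h2 : φ.p a u = a'}
    (hx : b = x) (hw : w = u ≫ eqToHom hx) :
    (⟨x, ⟨w, h1⟩⟩ : LambdaHom φ a a') = ⟨b, ⟨u, h2⟩⟩ := by
  subst hx
  subst hw
  simp

/-- The induced category `Λ` of a cofunctor `φ : B ⇸ A`: a type synonym for the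
objects of `A`. -/
def Lambda (φ : Cofunctor B A) := A

instance (φ : Cofunctor B A) : Category (Lambda φ) where
  Hom a a' := LambdaHom φ a a'
  id a := lambdaId φ a
  comp m n := lambdaComp φ m n
  id_comp {a a'} m := by
    obtain ⟨b, u, hu⟩ := m
    dsimp [lambdaComp, lambdaId]
    congr 1
    · ext
      simp
  comp_id {a a'} m := by
    obtain ⟨b, u, hu⟩ := m
    dsimp [lambdaComp, lambdaId]
    subst hu
    exact LambdaHom.ext' (φ.obj_p a u).symm (by simp)
  assoc {a₁ a₂ a₃ a₄} m n k := by
    obtain ⟨b, u, hu⟩ := m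
    obtain ⟨c, v, hv⟩ := n
    obtain ⟨d, w, hw⟩ := k
    dsimp [lambdaComp]
    subst hu; subst hv; subst hw
    congr 1
    · ext
      simp

/-- The morphism assignment `(a, u) ↦ u` of the discrete opfibration `φ̄ : Λ ⟶ B`. -/
def barMap (φ : Cofunctor B A) {a a' : A} (m : LambdaHom φ a a') : φ.obj a ⟶ φ.obj a' :=
  m.2.1 ≫ eqToHom ((φ.obj_p a m.2.1).symm.trans (congrArg φ.obj m.2.2))

/-- The morphism assignment `(a, u) ↦ φ₁(a, u)` of the identity-on-objects functor
`φ : Λ ⟶ A`. -/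
def phiMap (φ : Cofunctor B A) {a a' : A} (m : LambdaHom φ a a') : a ⟶ a' :=
  φ.lift a m.2.1 ≫ eqToHom m.2.2

/-- The discrete opfibration `φ̄ : Λ ⥤ B` induced by a cofunctor, sending
`a ↦ φ₀(a)` and `(a, u) ↦ u`. -/
def barFunctor (φ : Cofunctor B A) : Lambda φ ⥤ B where
  obj a := φ.obj a
  map m := barMap φ m
  map_id a := by
    dsimp [barMap, lambdaId, CategoryStruct.id]
    simp [lambdaId]
  map_comp {a a' a''} m n := by
    obtain ⟨b, u, hu⟩ := m
    obtain ⟨c, v, hv⟩ := n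
    dsimp [barMap, CategoryStruct.comp, lambdaComp]
    subst hu; subst hv
    simp

/-- The identity-on-objects functor `φ : Λ ⥤ A` induced by a cofunctor, sending
`a ↦ a` and `(a, u) ↦ φ₁(a, u)`. -/
def phiFunctor (φ : Cofunctor B A) : Lambda φ ⥤ A where
  obj a := a
  map m := phiMap φ m
  map_id (a : A) := by
    dsimp [phiMap, CategoryStruct.id]
    simp [lambdaId, φ.lift_id]
    exact (eqToHom_trans _ _).trans (eqToHom_refl _ _)
  map_comp {a a' a'' : A} m n := by
    obtain ⟨b, u, hu⟩ := m
    obtain ⟨c, v, hv⟩ := n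
    dsimp [phiMap, CategoryStruct.comp, lambdaComp]
    subst hu; subst hv
    rw [φ.lift_comp]
    simp

theorem Cofunctor.p_eqToHom (φ : Cofunctor B A) (a : A) {x : B} (e : φ.obj a = x) :
    φ.p a (eqToHom e) = a := by
  subst e
  simpa using φ.p_id a

theorem Cofunctor.lift_eqToHom (φ : Cofunctor B A) (a : A) {x : B} (e : φ.obj a = x) :
    φ.lift a (eqToHom e) = eqToHom (φ.p_eqToHom a e).symm := by
  subst e
  simpa using φ.lift_id a

theorem Cofunctor.p_comp_eqToHom (φ : Cofunctor B A) (a : A) {b c : B}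
    (u : φ.obj a ⟶ b) (e : b = c) : φ.p a (u ≫ eqToHom e) = φ.p a u := by
  subst e
  simp

theorem Cofunctor.lift_comp_eqToHom (φ : Cofunctor B A) (a : A) {b c : B}
    (u : φ.obj a ⟶ b) (e : b = c) :
    φ.lift a (u ≫ eqToHom e) =
      φ.lift a u ≫ eqToHom (φ.p_comp_eqToHom a u e).symm := by
  subst e
  simp

theorem Cofunctor.p_conj (γ : Cofunctor B A) {a' a : A} (he : a' = a) {b b' : B}
    (E : γ.obj a' = b) (E' : γ.obj a = b) (x : b ⟶ b') :
    γ.p a' (eqToHom E ≫ x) = γ.p a (eqToHom E' ≫ x) := by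
  subst he; rfl

theorem Cofunctor.lift_conj (γ : Cofunctor B A) {a' a : A} (he : a' = a) {b b' : B}
    (E : γ.obj a' = b) (E' : γ.obj a = b) (x : b ⟶ b') :
    γ.lift a' (eqToHom E ≫ x) =
      eqToHom he ≫ γ.lift a (eqToHom E' ≫ x) ≫ eqToHom (γ.p_conj he E E' x).symm := by
  subst he; simp

theorem Cofunctor.p_congr (φ : Cofunctor B A) (a : A) {b : B} {u v : φ.obj a ⟶ b}
    (h : u = v) : φ.p a u = φ.p a v := by rw [h]

theorem Cofunctor.lift_congr (φ : Cofunctor B A) (a : A) {b : B} {u v : φ.obj a ⟶ b}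
    (h : u = v) : φ.lift a u = φ.lift a v ≫ eqToHom (φ.p_congr a h).symm := by
  subst h; simp

theorem Cofunctor.p_shape (φ : Cofunctor B A) (a : A) {x y z : B}
    (e₁ : φ.obj a = x) (L : x ⟶ y) (e₂ : y = z) :
    φ.p a (eqToHom e₁ ≫ L ≫ eqToHom e₂) = φ.p a (eqToHom e₁ ≫ L) := by
  subst e₂; simp

theorem Cofunctor.lift_shape (φ : Cofunctor B A) (a : A) {x y z : B}
    (e₁ : φ.obj a = x) (L : x ⟶ y) (e₂ : y = z) :
    φ.lift a (eqToHom e₁ ≫ L ≫ eqToHom e₂) =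
      φ.lift a (eqToHom e₁ ≫ L) ≫ eqToHom (φ.p_shape a e₁ L e₂).symm := by
  subst e₂; simp

/-- The composite of cofunctors `φ : B ⇸ A` and `γ : C ⇸ B`: the object map is
`a ↦ γ₀(φ₀(a))` and the lift of `(a, w : γ₀(φ₀(a)) ⟶ c)` is `φ₁(a, γ₁(φ₀(a), w))`,
with codomain `p₀(a, γ₁(φ₀(a), w))`. -/
def Cofunctor.comp {C : Type u₃} [Category.{v₃} C] (φ : Cofunctor B A) (γ : Cofunctor C B) :
    Cofunctor C A where
  obj a := γ.obj (φ.obj a)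
  p a _ w := φ.p a (γ.lift (φ.obj a) w)
  lift a _ w := φ.lift a (γ.lift (φ.obj a) w)
  obj_p a _ w := ((congrArg γ.obj (φ.obj_p a (γ.lift (φ.obj a) w))).trans
    (γ.obj_p (φ.obj a) w))
  p_id a := by
    rw [γ.lift_id, φ.p_eqToHom]
  lift_id a := by
    rw [φ.lift_congr a (γ.lift_id (φ.obj a)), φ.lift_eqToHom]
    simp
  p_comp a c c' w x := by
    rw [γ.lift_comp, φ.p_comp,
      γ.lift_conj (φ.obj_p a (γ.lift (φ.obj a) w)) _ (γ.obj_p (φ.obj a) w) x,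
      ← Category.assoc, ← Category.assoc, φ.p_comp_eqToHom, φ.p_comp_eqToHom]
  lift_comp a c c' w x := by
    rw [φ.lift_congr a (γ.lift_comp (φ.obj a) w x), φ.lift_comp,
      φ.lift_congr _ (γ.lift_conj (φ.obj_p a (γ.lift (φ.obj a) w)) _ (γ.obj_p (φ.obj a) w) x),
      φ.lift_shape, φ.lift_shape]
    simp

/-- A delta lens `(f, φ) : A ⇄ B`: a Get functor `f : A ⥤ B` together with a Put
cofunctor `φ : B ⇸ A` agreeing with `f` on objects and satisfying the Put-Get law
`f(φ₁(a, u)) = u`. -/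
structure DLens (A : Type u₂) (B : Type u₁) [Category.{v₂} A] [Category.{v₁} B] where
  get : A ⥤ B
  put : Cofunctor B A
  obj_eq : ∀ a : A, put.obj a = get.obj a
  put_get : ∀ (a : A) ⦃b : B⦄ (u : put.obj a ⟶ b),
    get.map (put.lift a u) =
      eqToHom (obj_eq a).symm ≫ u ≫ eqToHom ((put.obj_p a u).symm.trans (obj_eq _))

/-- The strict pullback of two functors `F : X ⥤ Z` and `G : Y ⥤ Z`: objects are
pairs of objects with `F.obj x = G.obj y`, morphisms are pairs of morphisms with
`F.map m = G.map n` (modulo the identifications of endpoints). -/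
def FPullback {X : Type u₃} {Y : Type u₄} {Z : Type u} [Category.{v₃} X]
    [Category.{v₄} Y] [Category.{v} Z] (F : X ⥤ Z) (G : Y ⥤ Z) :=
  { pq : X × Y // F.obj pq.1 = G.obj pq.2 }

instance {X : Type u₃} {Y : Type u₄} {Z : Type u} [Category.{v₃} X]
    [Category.{v₄} Y] [Category.{v} Z] (F : X ⥤ Z) (G : Y ⥤ Z) :
    Category (FPullback F G) where
  Hom pq rs := { mn : (pq.1.1 ⟶ rs.1.1) × (pq.1.2 ⟶ rs.1.2) //
    F.map mn.1 = eqToHom pq.2 ≫ G.map mn.2 ≫ eqToHom rs.2.symm }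
  id pq := ⟨(𝟙 _, 𝟙 _), by simp⟩
  comp {pq rs tu} mn mn' := ⟨(mn.1.1 ≫ mn'.1.1, mn.1.2 ≫ mn'.1.2), by
    rw [F.map_comp, G.map_comp, mn.2, mn'.2]; simp⟩
  id_comp mn := by
    apply Subtype.ext
    dsimp
    simp
  comp_id mn := by
    apply Subtype.ext
    dsimp
    simp
  assoc m n k := by
    apply Subtype.ext
    dsimp
    simp

/-!
Every bar functor `φ̄ : Λ ⥤ B` is faithful: a morphism of an induced category is determined by
its image in the base. So functors into induced categories, and equalities between such functors,
can be checked after composing with bar functors, where they reduce to the functoriality of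
`γ̄` and of `γ : Ω ⥤ B`. The comparison sends `(a, w)` to `((a, γ₁(φ₀ a, w)), (φ₀ a, w))`;
conversely a pair `(m, n)` goes to `(a, n)`, which has the right codomain because the pullback
condition `φ̄ m = γ n` forces `p₀(a, γ₁(φ₀ a, n)) = cod m`.
-/

namespace CategoryTheory.Functor

variable {C : Type u₁} {D : Type u₂} {E : Type u₃} [Category.{v₁} C] [Category.{v₂} D]
  [Category.{v₃} E]

theorem ext_of_comp_faithful {F₁ F₂ : C ⥤ D} (P : D ⥤ E) [P.Faithful]
    (h_obj : ∀ X, F₁.obj X = F₂.obj X) (h : F₁ ⋙ P = F₂ ⋙ P) : F₁ = F₂ :=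
  Functor.ext h_obj fun _ _ f => P.map_injective <| by
    simpa [eqToHom_map] using Functor.congr_hom h f

end CategoryTheory.Functor

namespace FPullback

variable {W : Type u} {X : Type u₃} {Y : Type u₄} {Z : Type u₁} [Category.{v} W]
  [Category.{v₃} X] [Category.{v₄} Y] [Category.{v₁} Z] {F : X ⥤ Z} {G : Y ⥤ Z}

theorem ext {pq rs : FPullback F G} (h₁ : pq.1.1 = rs.1.1) (h₂ : pq.1.2 = rs.1.2) : pq = rs :=
  Subtype.ext (Prod.ext h₁ h₂)

theorem hom_ext {pq rs : FPullback F G} {mn mn' : pq ⟶ rs} (h₁ : mn.1.1 = mn'.1.1)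
    (h₂ : mn.1.2 = mn'.1.2) : mn = mn' :=
  Subtype.ext (Prod.ext h₁ h₂)

@[simp]
theorem comp_fst {pq rs tu : FPullback F G} (mn : pq ⟶ rs) (mn' : rs ⟶ tu) :
    (mn ≫ mn').1.1 = mn.1.1 ≫ mn'.1.1 :=
  rfl

@[simp]
theorem comp_snd {pq rs tu : FPullback F G} (mn : pq ⟶ rs) (mn' : rs ⟶ tu) :
    (mn ≫ mn').1.2 = mn.1.2 ≫ mn'.1.2 :=
  rfl

@[simp]
theorem eqToHom_fst {pq rs : FPullback F G} (h : pq = rs) :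
    (eqToHom h).1.1 = eqToHom (congrArg (fun st => st.1.1) h) := by
  subst h; rfl

@[simp]
theorem eqToHom_snd {pq rs : FPullback F G} (h : pq = rs) :
    (eqToHom h).1.2 = eqToHom (congrArg (fun st => st.1.2) h) := by
  subst h; rfl

variable (F G) in
@[simps]
def fst : FPullback F G ⥤ X where
  obj pq := pq.1.1
  map mn := mn.1.1

variable (F G) in
@[simps]
def snd : FPullback F G ⥤ Y where
  obj pq := pq.1.2
  map mn := mn.1.2

variable (F G) in
theorem fst_comp_eq_snd_comp : fst F G ⋙ F = snd F G ⋙ G :=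
  CategoryTheory.Functor.ext (fun pq => pq.2) fun _ _ mn => mn.2

def lift (H : W ⥤ X) (K : W ⥤ Y) (h : H ⋙ F = K ⋙ G) : W ⥤ FPullback F G where
  obj w := ⟨(H.obj w, K.obj w), Functor.congr_obj h w⟩
  map f := ⟨(H.map f, K.map f), Functor.congr_hom h f⟩

@[simp]
theorem lift_fst (H : W ⥤ X) (K : W ⥤ Y) (h : H ⋙ F = K ⋙ G) : lift H K h ⋙ fst F G = H :=
  rfl

@[simp]
theorem lift_snd (H : W ⥤ X) (K : W ⥤ Y) (h : H ⋙ F = K ⋙ G) : lift H K h ⋙ snd F G = K :=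
  rfl

theorem functor_ext {K₁ K₂ : W ⥤ FPullback F G} (h₁ : K₁ ⋙ fst F G = K₂ ⋙ fst F G)
    (h₂ : K₁ ⋙ snd F G = K₂ ⋙ snd F G) : K₁ = K₂ :=
  CategoryTheory.Functor.ext (fun w => ext (Functor.congr_obj h₁ w) (Functor.congr_obj h₂ w))
    fun _ _ f => hom_ext
      (by
        have h := Functor.congr_hom h₁ f
        simp only [Functor.comp_obj, Functor.comp_map, fst_map, comp_fst, eqToHom_fst] at h ⊢
        exact h)
      (by
        have h := Functor.congr_hom h₂ f
        simp only [Functor.comp_obj, Functor.comp_map, snd_map, comp_snd, eqToHom_snd] at h ⊢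
        exact h)

end FPullback

namespace Lambda

variable {C : Type u₃} [Category.{v₃} C] (φ : Cofunctor B A) (γ : Cofunctor C B)

instance : (barFunctor φ).Faithful where
  map_injective {a _} m m' h := by
    obtain ⟨b, u, rfl⟩ := m
    obtain ⟨b', u', hu'⟩ := m'
    have hb : b' = b := (φ.obj_p a u').symm.trans ((congrArg φ.obj hu').trans (φ.obj_p a u))
    subst hb
    have hu : u = u' := (cancel_mono _).1 h
    subst hu
    rfl

variable {φ} in
theorem p_eq_of_barMap_eq {a a' : A} (m : LambdaHom φ a a') {b : B} (u : φ.obj a ⟶ b)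
    (e : b = φ.obj a') (h : barMap φ m = u ≫ eqToHom e) : φ.p a u = a' := by
  obtain ⟨b', u', rfl⟩ := m
  have hb : b' = b := (φ.obj_p a u').symm.trans e.symm
  subst hb
  have hu : u = u' := (cancel_mono _).1 h.symm
  rw [hu]

def compSnd : Lambda (φ.comp γ) ⥤ Lambda γ where
  obj a := φ.obj a
  map m := ⟨m.1, m.2.1, (φ.obj_p _ _).symm.trans (congrArg φ.obj m.2.2)⟩
  map_id _ := rfl
  map_comp _ _ := rfl

theorem compSnd_comp_barFunctor : compSnd φ γ ⋙ barFunctor γ = barFunctor (φ.comp γ) :=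
  rfl

def compFst : Lambda (φ.comp γ) ⥤ Lambda φ :=
  Functor.Faithful.div (compSnd φ γ ⋙ phiFunctor γ) (barFunctor φ) id (fun _ => rfl)
    (fun m => ⟨_, γ.lift _ m.2.1, m.2.2⟩) HEq.rfl

theorem compFst_comp_barFunctor :
    compFst φ γ ⋙ barFunctor φ = compSnd φ γ ⋙ phiFunctor γ :=
  Functor.hext (fun _ => rfl) fun _ _ _ => HEq.rfl

def toPullback : Lambda (φ.comp γ) ⥤ FPullback (barFunctor φ) (phiFunctor γ) :=
  FPullback.lift (compFst φ γ) (compSnd φ γ) (compFst_comp_barFunctor φ γ)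

variable {φ γ} in
theorem p_lift_eq_of_barMap_eq {a a' : A} {b b' : B} (h : φ.obj a = b) (h' : φ.obj a' = b')
    (m : LambdaHom φ a a') (n : LambdaHom γ b b')
    (hmn : barMap φ m = eqToHom h ≫ phiMap γ n ≫ eqToHom h'.symm) :
    φ.p a (γ.lift (φ.obj a) (eqToHom (congrArg γ.obj h) ≫ n.2.1)) = a' := by
  subst h h'
  obtain ⟨c, v, hv⟩ := n
  rw [eqToHom_refl, Category.id_comp]
  exact p_eq_of_barMap_eq m _ hv (by simpa [phiMap] using hmn)

variable {φ γ} in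
theorem barMap_comp_eqToHom_heq {a a' : A} {b b' : B} (h : φ.obj a = b) (h' : φ.obj a' = b')
    {c : C} (v : γ.obj b ⟶ c) (hv : γ.p b v = b')
    (hp : φ.p a (γ.lift (φ.obj a) (eqToHom (congrArg γ.obj h) ≫ v)) = a') :
    barMap (φ.comp γ) (⟨c, eqToHom (congrArg γ.obj h) ≫ v, hp⟩ : LambdaHom (φ.comp γ) a a') ≍
      barMap γ (⟨c, v, hv⟩ : LambdaHom γ b b') := by
  subst h h'
  exact heq_of_eq (congrArg (· ≫ _) (Category.id_comp v))

def ofPullback : FPullback (barFunctor φ) (phiFunctor γ) ⥤ Lambda (φ.comp γ) :=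
  Functor.Faithful.div (FPullback.snd _ _ ⋙ barFunctor γ) (barFunctor (φ.comp γ)) (·.1.1)
    (fun pq => congrArg γ.obj pq.2)
    (fun {pq rs} mn => ⟨_, eqToHom (congrArg γ.obj pq.2) ≫ mn.1.2.2.1,
      p_lift_eq_of_barMap_eq pq.2 rs.2 mn.1.1 mn.1.2 mn.2⟩)
    fun {pq rs _} => barMap_comp_eqToHom_heq pq.2 rs.2 _ _ _

theorem ofPullback_comp_barFunctor :
    ofPullback φ γ ⋙ barFunctor (φ.comp γ) = FPullback.snd _ _ ⋙ barFunctor γ :=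
  Functor.hext (fun pq => congrArg γ.obj pq.2) fun pq rs _ =>
    barMap_comp_eqToHom_heq pq.2 rs.2 _ _ _

theorem ofPullback_comp_compSnd : ofPullback φ γ ⋙ compSnd φ γ = FPullback.snd _ _ :=
  Functor.ext_of_comp_faithful (barFunctor γ) (fun pq => pq.2) <| by
    rw [Functor.assoc, compSnd_comp_barFunctor, ofPullback_comp_barFunctor]

theorem toPullback_comp_ofPullback : toPullback φ γ ⋙ ofPullback φ γ = 𝟭 _ :=
  Functor.ext_of_comp_faithful (barFunctor (φ.comp γ)) (fun _ => rfl) <| by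
    rw [Functor.assoc, ofPullback_comp_barFunctor, ← Functor.assoc, toPullback,
      FPullback.lift_snd, compSnd_comp_barFunctor, Functor.id_comp]

theorem ofPullback_comp_toPullback : ofPullback φ γ ⋙ toPullback φ γ = 𝟭 _ := by
  have h_snd : ofPullback φ γ ⋙ toPullback φ γ ⋙ FPullback.snd _ _ = FPullback.snd _ _ := by
    rw [toPullback, FPullback.lift_snd, ofPullback_comp_compSnd]
  have h_fst : ofPullback φ γ ⋙ toPullback φ γ ⋙ FPullback.fst _ _ = FPullback.fst _ _ := by
    refine Functor.ext_of_comp_faithful (barFunctor φ) (fun _ => rfl) ?_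
    rw [toPullback, FPullback.lift_fst, Functor.assoc, compFst_comp_barFunctor,
      ← Functor.assoc, ofPullback_comp_compSnd, FPullback.fst_comp_eq_snd_comp]
  exact FPullback.functor_ext h_fst h_snd

end Lambda

/-- For delta lenses `(f, φ) : A ⇄ B` and `(g, γ) : B ⇄ C`, the induced category of
the composite delta lens is isomorphic, as a category, to the pullback `Λ ×_B Ω` of
the discrete opfibration `φ̄ : Λ ⥤ B` and the identity-on-objects functor
`γ : Ω ⥤ B`. -/
theorem composite_lambda_iso_pullback {C : Type u₃} [Category.{v₃} C]
    (L₁ : DLens A B) (L₂ : DLens B C) :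
    ∃ (F : Lambda (L₁.put.comp L₂.put) ⥤ FPullback (barFunctor L₁.put) (phiFunctor L₂.put))
      (G : FPullback (barFunctor L₁.put) (phiFunctor L₂.put) ⥤ Lambda (L₁.put.comp L₂.put)),
      F ⋙ G = 𝟭 (Lambda (L₁.put.comp L₂.put)) ∧
      G ⋙ F = 𝟭 (FPullback (barFunctor L₁.put) (phiFunctor L₂.put)) :=
  ⟨_, _, Lambda.toPullback_comp_ofPullback _ _, Lambda.ofPullback_comp_toPullback _ _⟩
end

section
/- Let φ be a cofunctor from a small category B to a small category A such that the map sending each pair (a, u : φ₀(a) → b) to the morphism φ₁(a, u) of A is a bijection onto the set of all morphisms of A. Then the assignment sending each object a of A to φ₀(a) and each morphism m : a → a′ of A to the unique u with φ₁(a, u) = m defines a discrete opfibration from A to B. -/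
open CategoryTheory

universe v v₁ v₂ v₃ v₄ u u₁ u₂ u₃ u₄

variable {B : Type u₁} {A : Type u₂} [Category.{v₁} B] [Category.{v₂} A]

/-- A functor is a discrete opfibration if every morphism out of the image of an
object has a unique lift with prescribed domain. -/
def IsDiscreteOpfib {A : Type u₂} {B : Type u₁} [Category.{v₂} A] [Category.{v₁} B]
    (F : A ⥤ B) : Prop :=
  ∀ ⦃a : A⦄ ⦃b : B⦄ (u : F.obj a ⟶ b),
    ∃! w : Σ a' : A, a ⟶ a',
      (⟨F.obj w.1, F.map w.2⟩ : Σ b' : B, (F.obj a ⟶ b')) = ⟨b, u⟩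

/-! Bijectivity says that every morphism `m : a ⟶ a'` of `A` is `φ₁(a, u)` for exactly one `u`
out of `φ₀(a)`. Sending `m` to that `u` is functorial by the cofunctor laws (ii) and (iii), and
the unique-lift property of the resulting functor is the same bijectivity read backwards. -/

theorem Function.Surjective.of_sigma_map {α₁ α₂ : Type*} {β₁ : α₁ → Type*} {β₂ : α₂ → Type*}
    {f₁ : α₁ → α₂} {f₂ : ∀ a, β₁ a → β₂ (f₁ a)} (h₁ : Function.Injective f₁)
    (h : Function.Surjective (Sigma.map f₁ f₂)) (a : α₁) : Function.Surjective (f₂ a) := by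
  intro y
  obtain ⟨⟨i, x⟩, hx⟩ := h ⟨f₁ a, y⟩
  obtain rfl : i = a := h₁ (Sigma.mk.inj_iff.mp hx).1
  exact ⟨x, sigma_mk_injective hx⟩

namespace Cofunctor

variable (φ : Cofunctor B A)

def liftAt (a : A) (x : Σ b : B, φ.obj a ⟶ b) : Σ a' : A, a ⟶ a' :=
  ⟨φ.p a x.2, φ.lift a x.2⟩

theorem bijective_liftAt_of_bijective
    (hbij : Function.Bijective
      (Sigma.map id φ.liftAt : (Σ a : A, Σ b : B, φ.obj a ⟶ b) → Σ a : A, Σ a' : A, a ⟶ a'))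
    (a : A) :
    Function.Bijective (φ.liftAt a) :=
  ⟨hbij.1.of_sigma_map a, hbij.2.of_sigma_map Function.injective_id a⟩

theorem sigma_mk_comp_eqToHom_obj_p (a : A) {b : B} (u : φ.obj a ⟶ b) :
    (⟨φ.obj (φ.p a u), u ≫ eqToHom (φ.obj_p a u).symm⟩ : Σ b' : B, φ.obj a ⟶ b') = ⟨b, u⟩ :=
  Sigma.ext (φ.obj_p a u) (comp_eqToHom_heq _ _)

theorem lift_eq_of_eq {a : A} {b : B} {u u' : φ.obj a ⟶ b} (h : u = u') :
    φ.lift a u = φ.lift a u' ≫ eqToHom (by rw [h]) := by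
  subst h
  simp

theorem lift_comp_lift (a : A) {b c : B} (u : φ.obj a ⟶ b) (v : φ.obj (φ.p a u) ⟶ c) :
    φ.lift a u ≫ φ.lift (φ.p a u) v =
      φ.lift a (u ≫ eqToHom (φ.obj_p a u).symm ≫ v) ≫
        eqToHom (by rw [φ.p_comp, eqToHom_trans_assoc, eqToHom_refl, Category.id_comp]) := by
  have hv : v = eqToHom (φ.obj_p a u) ≫ eqToHom (φ.obj_p a u).symm ≫ v := by simp
  rw [φ.lift_comp, φ.lift_eq_of_eq hv]
  simp

@[elab_as_elim]
theorem lift_induction (hφ : ∀ a, Function.Surjective (φ.liftAt a)) {a : A}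
    {P : ∀ ⦃a'⦄, (a ⟶ a') → Prop}
    (lift : ∀ ⦃b⦄ (u : φ.obj a ⟶ b), P (φ.lift a u)) ⦃a' : A⦄ (m : a ⟶ a') : P m := by
  obtain ⟨⟨b, u⟩, hu⟩ := hφ a ⟨a', m⟩
  obtain ⟨rfl, hm⟩ := Sigma.mk.inj_iff.mp hu
  cases eq_of_heq hm
  exact lift u

section Bijective

variable {φ} (hφ : ∀ a, Function.Bijective (φ.liftAt a))

noncomputable def liftEquiv (a : A) : (Σ b : B, φ.obj a ⟶ b) ≃ Σ a' : A, a ⟶ a' :=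
  Equiv.ofBijective _ (hφ a)

theorem obj_liftEquiv_symm_fst {a a' : A} (m : a ⟶ a') :
    ((liftEquiv hφ a).symm ⟨a', m⟩).1 = φ.obj a' := by
  have h := congrArg Sigma.fst ((liftEquiv hφ a).apply_symm_apply ⟨a', m⟩)
  exact (φ.obj_p a _).symm.trans (congrArg φ.obj h)

noncomputable def mapOfBijective {a a' : A} (m : a ⟶ a') : φ.obj a ⟶ φ.obj a' :=
  ((liftEquiv hφ a).symm ⟨a', m⟩).2 ≫ eqToHom (obj_liftEquiv_symm_fst hφ m)

theorem sigma_mk_mapOfBijective {a a' : A} (m : a ⟶ a') :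
    (⟨φ.obj a', mapOfBijective hφ m⟩ : Σ b : B, φ.obj a ⟶ b) = (liftEquiv hφ a).symm ⟨a', m⟩ :=
  (Sigma.ext (obj_liftEquiv_symm_fst hφ m) (comp_eqToHom_heq _ _).symm).symm

theorem mapOfBijective_lift (a : A) {b : B} (u : φ.obj a ⟶ b) :
    mapOfBijective hφ (φ.lift a u) = u ≫ eqToHom (φ.obj_p a u).symm :=
  sigma_mk_injective <| (sigma_mk_mapOfBijective hφ _).trans <|
    ((liftEquiv hφ a).symm_apply_apply ⟨b, u⟩).trans (φ.sigma_mk_comp_eqToHom_obj_p a u).symm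

theorem mapOfBijective_comp_eqToHom {a a' a'' : A} (m : a ⟶ a') (h : a' = a'') :
    mapOfBijective hφ (m ≫ eqToHom h) = mapOfBijective hφ m ≫ eqToHom (congrArg φ.obj h) := by
  subst h
  simp

noncomputable def toFunctor : A ⥤ B where
  obj := φ.obj
  map := mapOfBijective hφ
  map_id a := by
    have h := mapOfBijective_comp_eqToHom hφ (φ.lift a (𝟙 _)) (φ.p_id a)
    rw [mapOfBijective_lift, φ.lift_id] at h
    simpa using h
  map_comp {a a' a''} m n := by
    induction m using φ.lift_induction (fun a => (hφ a).2) with | lift u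
    induction n using φ.lift_induction (fun a => (hφ a).2) with | lift v
    rw [lift_comp_lift, mapOfBijective_comp_eqToHom, mapOfBijective_lift, mapOfBijective_lift,
      mapOfBijective_lift]
    simp

theorem isDiscreteOpfib_toFunctor : IsDiscreteOpfib (toFunctor hφ) := by
  intro a b u
  refine ⟨liftEquiv hφ a ⟨b, u⟩, ?_, fun w hw => ?_⟩
  · exact (sigma_mk_mapOfBijective hφ _).trans ((liftEquiv hφ a).symm_apply_apply _)
  · exact (liftEquiv hφ a).symm_apply_eq.1 ((sigma_mk_mapOfBijective hφ w.2).symm.trans hw)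

end Bijective

end Cofunctor

/-- If the map sending each pair `(a, u : φ₀(a) ⟶ b)` to the lift `φ₁(a, u)` is a
bijection onto the set of all morphisms of `A`, then sending each object `a` to
`φ₀(a)` and each morphism `m : a ⟶ a′` of `A` to the unique `u` with `φ₁(a, u) = m`
defines a discrete opfibration from `A` to `B`. -/
theorem cofunctor_bijective_lifts_discreteOpfibration (φ : Cofunctor B A)
    (hbij : Function.Bijective
      (fun x : Σ (a : A) (b : B), (φ.obj a ⟶ b) =>
        (⟨x.1, φ.p x.1 x.2.2, φ.lift x.1 x.2.2⟩ : Σ (a : A) (a' : A), (a ⟶ a')))) :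
    ∃ (F : A ⥤ B) (h : ∀ a : A, F.obj a = φ.obj a),
      (∀ (a : A) ⦃b : B⦄ (u : φ.obj a ⟶ b),
        F.map (φ.lift a u) =
          eqToHom (h a) ≫ u ≫ eqToHom ((φ.obj_p a u).symm.trans (h _).symm)) ∧
      IsDiscreteOpfib F := by
  have hφ := φ.bijective_liftAt_of_bijective hbij
  refine ⟨Cofunctor.toFunctor hφ, fun _ => rfl, fun a _ u => ?_,
    Cofunctor.isDiscreteOpfib_toFunctor hφ⟩
  exact (Cofunctor.mapOfBijective_lift hφ a u).trans (Category.id_comp _).symm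
end

section
/- Let A and B be sets and let (f, p) be a state-based lens: f : A → B and p : A × B → A satisfy the Put-Get law f(p(a, b)) = b, the Get-Put law p(a, f(a)) = a, and the Put-Put law p(p(a, b), b′) = p(a, b′). Then the following data forms a small category Λ: the objects are the elements of A; a morphism from a to a′ is a pair (a, b) ∈ A × B with p(a, b) = a′; the identity on a is (a, f(a)); and the composite of (a, b) : a → p(a, b) followed by (p(a, b), b′) : p(a, b) → p(p(a, b), b′) is (a, b′). -/
universe u v

/-- A morphism `a → a′` of the category induced by a state-based lens `(f, p)`:
a pair `(a, b)` with `p(a, b) = a′`. -/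
def SLHom {A : Type u} {B : Type v} (p : A × B → A) (a a' : A) : Type v :=
  { b : B // p (a, b) = a' }

/-- The identity morphism `(a, f(a))`. -/
def slId {A : Type u} {B : Type v} (f : A → B) (p : A × B → A)
    (hGetPut : ∀ a, p (a, f a) = a) (a : A) : SLHom p a a :=
  ⟨f a, hGetPut a⟩

/-- The composition: `(p(a, b), b′) ∘ (a, b) = (a, b′)`. -/
def slComp {A : Type u} {B : Type v} (p : A × B → A)
    (hPutPut : ∀ a b b', p (p (a, b), b') = p (a, b')) {a a' a'' : A}
    (m : SLHom p a a') (n : SLHom p a' a'') : SLHom p a a'' :=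
  ⟨n.1, by
    obtain ⟨b, hb⟩ := m
    obtain ⟨b', hb'⟩ := n
    subst hb
    dsimp
    rw [← hPutPut a b b']
    exact hb'⟩

/-! A morphism is determined by its `B`-component and composition keeps the second component,
so left identity and associativity hold definitionally; right identity is the Put-Get law. -/

section

variable {A : Type u} {B : Type v} {p : A × B → A}

theorem SLHom.ext {a a' : A} {m n : SLHom p a a'} (h : m.1 = n.1) : m = n :=
  Subtype.ext h

variable (hPutPut : ∀ a b b', p (p (a, b), b') = p (a, b'))

theorem slComp_slId_left (f : A → B) (hGetPut : ∀ a, p (a, f a) = a) {a a' : A}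
    (m : SLHom p a a') : slComp p hPutPut (slId f p hGetPut a) m = m :=
  rfl

theorem slComp_slId_right {f : A → B} (hPutGet : ∀ a b, f (p (a, b)) = b)
    (hGetPut : ∀ a, p (a, f a) = a) {a a' : A} (m : SLHom p a a') :
    slComp p hPutPut m (slId f p hGetPut a') = m := by
  obtain ⟨b, rfl⟩ := m
  exact SLHom.ext (hPutGet a b)

theorem slComp_assoc {a₁ a₂ a₃ a₄ : A} (m : SLHom p a₁ a₂) (n : SLHom p a₂ a₃)
    (k : SLHom p a₃ a₄) :
    slComp p hPutPut (slComp p hPutPut m n) k = slComp p hPutPut m (slComp p hPutPut n k) :=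
  rfl

end

/-- Given a state-based lens `(f, p) : A ⇄ B` (satisfying the Put-Get, Get-Put and
Put-Put laws), the elements of `A` with morphisms `a → a′` the pairs `(a, b)` with
`p(a, b) = a′`, identities `(a, f(a))` and composition `(p(a, b), b′) ∘ (a, b) = (a, b′)`
form a category `Λ`. -/
theorem state_lens_forms_category {A : Type u} {B : Type v} (f : A → B) (p : A × B → A)
    (hPutGet : ∀ a b, f (p (a, b)) = b)
    (hGetPut : ∀ a, p (a, f a) = a)
    (hPutPut : ∀ a b b', p (p (a, b), b') = p (a, b')) :
    (∀ (a a' : A) (m : SLHom p a a'),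
      slComp p hPutPut (slId f p hGetPut a) m = m) ∧
    (∀ (a a' : A) (m : SLHom p a a'),
      slComp p hPutPut m (slId f p hGetPut a') = m) ∧
    (∀ (a₁ a₂ a₃ a₄ : A) (m : SLHom p a₁ a₂) (n : SLHom p a₂ a₃) (k : SLHom p a₃ a₄),
      slComp p hPutPut (slComp p hPutPut m n) k =
        slComp p hPutPut m (slComp p hPutPut n k)) :=
  ⟨fun _ _ => slComp_slId_left hPutPut f hGetPut,
    fun _ _ => slComp_slId_right hPutPut hPutGet hGetPut,
    fun _ _ _ _ => slComp_assoc hPutPut⟩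
end
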